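/- For σ, ζ > 0, the convolution identity G_ζ * ((∂_φ(G_ζ*F_{σ,0}))·F_{σ,0}/(G_ζ*F_{σ,0})) = (σ²/(σ²+ζ²))·∂_φ(G_ζ*F_{σ,0}) holds pointwise on ℝ, where G_ζ(u)=exp(−u²/(2ζ²)) and F_{σ,0} is the centered Gaussian with standard deviation σ. -/

import Mathlib

open MeasureTheory

/-- Scaled Gaussian interaction kernel. -/
noncomputable def Gzeta (ζ u : ℝ) : ℝ := Real.exp (-u^2 / (2 * ζ^2))

/-- Gaussian density with mean `μ` and standard deviation `s`. -/
noncomputable def gaussF (s μ φ : ℝ) : ℝ :=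
  (1 / (Real.sqrt (2 * Real.pi) * s)) * Real.exp (-(φ - μ)^2 / (2 * s^2))

/-- Convolution (in the opinion variable) of the kernel `Gzeta ζ` with the
centered Gaussian of standard deviation `σ`. -/
noncomputable def GconvF (ζ σ : ℝ) (φ : ℝ) : ℝ :=
  ∫ y : ℝ, Gzeta ζ (φ - y) * gaussF σ 0 y

/-!
Completing the square in `y` writes `Gzeta ζ (x - y) * gaussF σ 0 y` as a factor depending on `x`
times a Gaussian in `y` centred at `σ² x / (σ² + ζ²)`. Integrating gives the closed form
`GconvF ζ σ = √(2π) ζ · gaussF √(σ² + ζ²) 0`, whence `∂ GconvF ζ σ x = -x / (σ² + ζ²) · GconvF ζ σ x`.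
The integrand of the identity is therefore `-y / (σ² + ζ²)` times `Gzeta ζ (φ - y) * gaussF σ 0 y`,
and the first moment of that Gaussian in `y` is its centre `σ² φ / (σ² + ζ²)` times its mass
`GconvF ζ σ φ`.
-/

open Real

lemma integral_exp_neg_mul_sq_sub (b c : ℝ) :
    ∫ x : ℝ, exp (-b * (x - c) ^ 2) = √(π / b) :=
  (integral_sub_right_eq_self (fun x => exp (-b * x ^ 2)) c).trans (integral_gaussian b)

lemma integral_mul_exp_neg_mul_sq (b : ℝ) : ∫ x : ℝ, x * exp (-b * x ^ 2) = 0 := by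
  have h_odd := integral_neg_eq_self (fun x : ℝ => x * exp (-b * x ^ 2)) volume
  simp only [neg_sq, neg_mul, integral_neg] at h_odd
  simp only [neg_mul]
  linarith

lemma integral_mul_exp_neg_mul_sq_sub {b : ℝ} (hb : 0 < b) (c : ℝ) :
    ∫ x : ℝ, x * exp (-b * (x - c) ^ 2) = c * √(π / b) :=
  calc ∫ x : ℝ, x * exp (-b * (x - c) ^ 2) = ∫ x : ℝ, (x + c) * exp (-b * x ^ 2) := by
        simpa only [sub_add_cancel] using
          integral_sub_right_eq_self (μ := volume) (fun x => (x + c) * exp (-b * x ^ 2)) c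
    _ = (∫ x : ℝ, x * exp (-b * x ^ 2)) + ∫ x : ℝ, c * exp (-b * x ^ 2) := by
        simp_rw [add_mul]
        exact integral_add (integrable_mul_exp_neg_mul_sq hb)
          ((integrable_exp_neg_mul_sq hb).const_mul c)
    _ = c * √(π / b) := by
        rw [integral_mul_exp_neg_mul_sq, integral_const_mul, integral_gaussian, zero_add]

lemma gaussF_pos {s : ℝ} (hs : 0 < s) (μ x : ℝ) : 0 < gaussF s μ x := by
  unfold gaussF
  positivity

lemma hasDerivAt_gaussF (s μ x : ℝ) :
    HasDerivAt (gaussF s μ) (-((x - μ) / s ^ 2) * gaussF s μ x) x := by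
  have h_exponent : HasDerivAt (fun u => -(u - μ) ^ 2 / (2 * s ^ 2))
      (-(2 * (x - μ)) / (2 * s ^ 2)) x := by
    simpa using (((hasDerivAt_id x).sub_const μ).pow 2).neg.div_const (2 * s ^ 2)
  exact (h_exponent.exp.const_mul (1 / (√(2 * π) * s))).congr_deriv (by unfold gaussF; ring)

section

variable {σ ζ : ℝ}

lemma Gzeta_sub_mul_gaussF (hσ : σ ≠ 0) (hζ : ζ ≠ 0) (x y : ℝ) :
    Gzeta ζ (x - y) * gaussF σ 0 y =
      1 / (√(2 * π) * σ) * exp (-x ^ 2 / (2 * (σ ^ 2 + ζ ^ 2))) *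
        exp (-((σ ^ 2 + ζ ^ 2) / (2 * σ ^ 2 * ζ ^ 2)) *
          (y - σ ^ 2 / (σ ^ 2 + ζ ^ 2) * x) ^ 2) := by
  have hs : σ ^ 2 + ζ ^ 2 ≠ 0 := by positivity
  unfold Gzeta gaussF
  rw [mul_assoc, mul_left_comm, mul_assoc, ← exp_add, ← exp_add]
  congr 2
  field_simp
  ring

lemma GconvF_eq (hσ : 0 < σ) (hζ : 0 < ζ) (x : ℝ) :
    GconvF ζ σ x = √(2 * π) * ζ * gaussF √(σ ^ 2 + ζ ^ 2) 0 x := by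
  have hs : 0 < σ ^ 2 + ζ ^ 2 := by positivity
  have h_mass : √(π / ((σ ^ 2 + ζ ^ 2) / (2 * σ ^ 2 * ζ ^ 2))) =
      √(2 * π) * σ * ζ / √(σ ^ 2 + ζ ^ 2) := by
    rw [show π / ((σ ^ 2 + ζ ^ 2) / (2 * σ ^ 2 * ζ ^ 2)) = 2 * π * σ ^ 2 * ζ ^ 2 / (σ ^ 2 + ζ ^ 2)
      by field_simp, sqrt_div (by positivity), sqrt_mul (by positivity),
      sqrt_mul (by positivity), sqrt_sq hσ.le, sqrt_sq hζ.le]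
  unfold GconvF
  simp_rw [Gzeta_sub_mul_gaussF hσ.ne' hζ.ne' x]
  rw [integral_const_mul, integral_exp_neg_mul_sq_sub, h_mass]
  unfold gaussF
  rw [sq_sqrt hs.le, sub_zero]
  field_simp

lemma GconvF_pos (hσ : 0 < σ) (hζ : 0 < ζ) (x : ℝ) : 0 < GconvF ζ σ x := by
  rw [GconvF_eq hσ hζ]
  have := gaussF_pos (sqrt_pos.2 (by positivity : 0 < σ ^ 2 + ζ ^ 2)) 0 x
  positivity

lemma deriv_GconvF (hσ : 0 < σ) (hζ : 0 < ζ) (x : ℝ) :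
    deriv (GconvF ζ σ) x = -(x / (σ ^ 2 + ζ ^ 2)) * GconvF ζ σ x := by
  have hs : 0 ≤ σ ^ 2 + ζ ^ 2 := by positivity
  have h_closed : GconvF ζ σ = fun x => √(2 * π) * ζ * gaussF √(σ ^ 2 + ζ ^ 2) 0 x :=
    funext (GconvF_eq hσ hζ)
  rw [h_closed, ((hasDerivAt_gaussF _ 0 x).const_mul (√(2 * π) * ζ)).deriv, sq_sqrt hs]
  ring

lemma integral_Gzeta_sub_mul_mul_gaussF (hσ : σ ≠ 0) (hζ : ζ ≠ 0) (x : ℝ) :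
    ∫ y : ℝ, y * (Gzeta ζ (x - y) * gaussF σ 0 y) =
      σ ^ 2 / (σ ^ 2 + ζ ^ 2) * x * GconvF ζ σ x := by
  have hb : 0 < (σ ^ 2 + ζ ^ 2) / (2 * σ ^ 2 * ζ ^ 2) := by positivity
  unfold GconvF
  simp_rw [Gzeta_sub_mul_gaussF hσ hζ x, mul_left_comm _ (_ * _)]
  rw [integral_const_mul, integral_const_mul, integral_mul_exp_neg_mul_sq_sub hb,
    integral_exp_neg_mul_sq_sub]
  ring

end

theorem convolution_identity_nonsymmetric (σ ζ : ℝ) (hσ : 0 < σ) (hζ : 0 < ζ) :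
    ∀ φ : ℝ,
      (∫ y : ℝ,
          Gzeta ζ (φ - y) *
            (deriv (GconvF ζ σ) y * gaussF σ 0 y / GconvF ζ σ y)) =
        (σ^2 / (σ^2 + ζ^2)) * deriv (GconvF ζ σ) φ := by
  intro φ
  have hs : 0 < σ ^ 2 + ζ ^ 2 := by positivity
  have h_integrand : ∀ y, deriv (GconvF ζ σ) y * gaussF σ 0 y / GconvF ζ σ y =
      -(1 / (σ ^ 2 + ζ ^ 2)) * (y * gaussF σ 0 y) := by
    intro y
    rw [deriv_GconvF hσ hζ]
    field_simp [(GconvF_pos hσ hζ y).ne']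
  simp_rw [h_integrand, mul_left_comm (Gzeta ζ _)]
  rw [integral_const_mul, integral_Gzeta_sub_mul_mul_gaussF hσ.ne' hζ.ne', deriv_GconvF hσ hζ]
  field_simp
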